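/- arXiv:1903.05910 — 4 statements merged into one kernel-verified Lean document; each statement's English description precedes it below -/
import Mathlib

section
/- If a homogeneous noncommutative polynomial p of degree d with coefficient function P admits a t-term NC Waring decomposition, i.e. there exists A : Fin t → Fin g → ℂ with p = ∑_{s : Fin t} (∑_{j : Fin g} A(s,j) • x_j)^d in the free algebra, then p satisfies the compatibility condition: P(α) = P(α̃) for all words α, α̃ : Fin d → Fin g with 1_j^α = 1_j^{α̃} for every j : Fin g. -/
open scoped BigOperators

/-- The ordered noncommutative word `x_{α 0} x_{α 1} ⋯ x_{α (d-1)}` in the free algebra. -/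
noncomputable def ncWord {g d : ℕ} (α : Fin d → Fin g) : FreeAlgebra ℂ (Fin g) :=
  (List.ofFn fun i => FreeAlgebra.ι ℂ (α i)).prod

/-- `1_j^α`: the number of indices `i` with `α i = j`. -/
def wordCount {g d : ℕ} (α : Fin d → Fin g) (j : Fin g) : ℕ :=
  (Finset.univ.filter fun i => α i = j).card

/-!
Multiplying out `(∑ⱼ A(s,j) xⱼ)^d` gives `∑_α (∏ᵢ A(s,α i)) x^α`, and the words `x^α` are part of
the free-monoid basis of the free algebra, so `P α = ∑ₛ ∏ᵢ A(s, α i) = ∑ₛ ∏ⱼ A(s,j)^(1_j^α)`,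
which depends on `α` only through the letter counts.
-/

theorem FreeAlgebra.basisFreeMonoid_apply (R X : Type*) [CommSemiring R] (w : FreeMonoid X) :
    basisFreeMonoid R X w = FreeMonoid.lift (ι R) w := by
  simp [basisFreeMonoid, equivMonoidAlgebraFreeMonoid]

section NCWord

variable {g d : ℕ}

theorem ncWord_eq_basisFreeMonoid (α : Fin d → Fin g) :
    ncWord α = FreeAlgebra.basisFreeMonoid ℂ (Fin g) (FreeMonoid.ofList (List.ofFn α)) := by
  rw [FreeAlgebra.basisFreeMonoid_apply, FreeMonoid.lift_apply, FreeMonoid.toList_ofList,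
    List.map_ofFn]
  rfl

theorem linearIndependent_ncWord :
    LinearIndependent ℂ (ncWord : (Fin d → Fin g) → FreeAlgebra ℂ (Fin g)) := by
  have hinj : Function.Injective fun α : Fin d → Fin g => FreeMonoid.ofList (List.ofFn α) :=
    fun _ _ h => List.ofFn_injective (FreeMonoid.ofList.injective h)
  simpa only [Function.comp_def, ← ncWord_eq_basisFreeMonoid] using
    (FreeAlgebra.basisFreeMonoid ℂ (Fin g)).linearIndependent.comp _ hinj

theorem ncWord_cons (j : Fin g) (β : Fin d → Fin g) :
    ncWord (Fin.cons j β) = FreeAlgebra.ι ℂ j * ncWord β := by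
  simp [ncWord, List.ofFn_succ]

theorem sum_smul_ι_pow (B : Fin g → ℂ) (d : ℕ) :
    (∑ j, B j • FreeAlgebra.ι ℂ j) ^ d = ∑ α : Fin d → Fin g, (∏ i, B (α i)) • ncWord α := by
  induction d with
  | zero => simp [ncWord]
  | succ d ih =>
    rw [pow_succ', ih, Finset.sum_mul_sum,
      ← (Fin.consEquiv fun _ : Fin (d + 1) => Fin g).sum_comp, Fintype.sum_prod_type]
    refine Finset.sum_congr rfl fun j _ => Finset.sum_congr rfl fun β _ => ?_
    rw [show (Fin.consEquiv fun _ => Fin g) (j, β) = Fin.cons j β from rfl, ncWord_cons,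
      Fin.prod_univ_succ, smul_mul_smul_comm]
    simp only [Fin.cons_zero, Fin.cons_succ]

theorem prod_comp_eq_prod_pow_wordCount {M : Type*} [CommMonoid M] (f : Fin g → M)
    (α : Fin d → Fin g) : ∏ i, f (α i) = ∏ j, f j ^ wordCount α j := by
  rw [← Finset.prod_fiberwise' Finset.univ α f]
  simp only [Finset.prod_const, wordCount]

theorem eq_sum_prod_of_sum_smul_ncWord_eq_sum_pow {t : ℕ} {P : (Fin d → Fin g) → ℂ}
    {A : Fin t → Fin g → ℂ}
    (h : ∑ α, P α • ncWord α = ∑ s, (∑ j, A s j • FreeAlgebra.ι ℂ j) ^ d) (α : Fin d → Fin g) :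
    P α = ∑ s, ∏ i, A s (α i) := by
  simp_rw [sum_smul_ι_pow] at h
  rw [Finset.sum_comm] at h
  simp_rw [← Finset.sum_smul] at h
  exact Fintype.linearIndependent_iffₛ.1 linearIndependent_ncWord _ _ h α

end NCWord

theorem stmt0_general (g d t : ℕ)
    (P : (Fin d → Fin g) → ℂ) (A : Fin t → Fin g → ℂ)
    (hdecomp : (∑ α : Fin d → Fin g, P α • ncWord α)
      = ∑ s : Fin t, (∑ j : Fin g, A s j • FreeAlgebra.ι ℂ j) ^ d) :
    ∀ α α' : Fin d → Fin g,
      (∀ j : Fin g, wordCount α j = wordCount α' j) → P α = P α' := by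
  intro α α' hcount
  simp only [eq_sum_prod_of_sum_smul_ncWord_eq_sum_pow hdecomp, prod_comp_eq_prod_pow_wordCount,
    hcount]

theorem stmt0 (g d t : ℕ) (hg : 1 ≤ g) (hd : 1 ≤ d) (ht : 1 ≤ t)
    (P : (Fin d → Fin g) → ℂ) (A : Fin t → Fin g → ℂ)
    (hdecomp : (∑ α : Fin d → Fin g, P α • ncWord α)
      = ∑ s : Fin t, (∑ j : Fin g, A s j • FreeAlgebra.ι ℂ j) ^ d) :
    ∀ α α' : Fin d → Fin g,
      (∀ j : Fin g, wordCount α j = wordCount α' j) → P α = P α' :=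
  stmt0_general g d t P A hdecomp
end

section
/- If a homogeneous noncommutative polynomial p of degree d ≥ 1 with coefficient function P : (Fin d → Fin g) → ℂ satisfies the compatibility condition, then p has an NC Waring decomposition: there exist t ≥ 1 and A : Fin t → Fin g → ℂ with p = ∑_{s : Fin t} (∑_{j : Fin g} A(s,j) • x_j)^d in the free algebra FreeAlgebra ℂ (Fin g). -/
open scoped BigOperators

/-!
The coefficient vector of `(∑ j, a j • x j) ^ d` is `α ↦ ∏ i, a (α i)`, which depends only on the
multidegree of the word `α`. Conversely these vectors span every coefficient function that is
constant on multidegree fibres: a functional `c` annihilating all of them makes the commutative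
polynomial `∑ α, c α • X^(deg α)` vanish on `Kᵍ`, hence vanish for an infinite field `K`, so the sum
of `c` over every fibre is zero. Over an algebraically closed field a scalar multiple of such a
vector is again one (take a `d`-th root), and for `d ≥ 1` the zero vector is the one of `a = 0`, so
the span consists of nonempty plain sums of them.
-/

open Finset

theorem sum_smul_pow_eq_sum_smul_prod_ofFn {R A σ : Type*} [CommSemiring R] [Semiring A]
    [Algebra R A] [Fintype σ] (a : σ → R) (x : σ → A) (n : ℕ) :
    (∑ j, a j • x j) ^ n
      = ∑ α : Fin n → σ, (∏ i, a (α i)) • (List.ofFn fun i => x (α i)).prod := by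
  induction n with
  | zero => simp
  | succ n ih =>
    rw [pow_succ', ih, sum_mul_sum, ← (Fin.consEquiv fun _ => σ).sum_comp,
      Fintype.sum_prod_type]
    refine sum_congr rfl fun j _ => sum_congr rfl fun β _ => ?_
    simp [Fin.prod_univ_succ, List.ofFn_succ, smul_smul, mul_comm]

/-- The coefficient vector `α ↦ a^α` of the noncommutative power `(∑ j, a j • x j) ^ d`. -/
def powerCoeff {K σ ι : Type*} [CommMonoid K] [Fintype ι] (a : σ → K) : (ι → σ) → K :=
  fun α => ∏ i, a (α i)

section PowerCoeff

variable {K σ ι : Type*} [Fintype ι]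

theorem powerCoeff_smul [CommMonoid K] (z : K) (a : σ → K) :
    powerCoeff (ι := ι) (z • a) = z ^ Fintype.card ι • powerCoeff a := by
  ext α
  simp [powerCoeff, prod_mul_distrib]

theorem powerCoeff_zero [CommMonoidWithZero K] [Nonempty ι] :
    powerCoeff (ι := ι) (0 : σ → K) = 0 := by
  ext α
  simp [powerCoeff]

theorem exists_eq_sum_powerCoeff_of_mem_span [Field K] [IsAlgClosed K] [Nonempty ι]
    {v : (ι → σ) → K} (hv : v ∈ Submodule.span K (Set.range powerCoeff)) :
    ∃ (t : ℕ) (_ : 1 ≤ t) (A : Fin t → σ → K), v = ∑ s, powerCoeff (A s) := by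
  induction hv using Submodule.span_induction with
  | mem v hv =>
    obtain ⟨a, rfl⟩ := hv
    exact ⟨1, le_rfl, fun _ => a, by simp⟩
  | zero => exact ⟨1, le_rfl, fun _ => 0, by simp [powerCoeff_zero]⟩
  | add v w _ _ hv hw =>
    obtain ⟨t, ht, A, rfl⟩ := hv
    obtain ⟨u, -, B, rfl⟩ := hw
    exact ⟨t + u, by omega, Fin.append A B, by simp [Fin.sum_univ_add]⟩
  | smul c v _ hv =>
    obtain ⟨t, ht, A, rfl⟩ := hv
    obtain ⟨z, hz⟩ := IsAlgClosed.exists_pow_nat_eq c (Fintype.card_pos (α := ι))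
    exact ⟨t, ht, fun s => z • A s, by simp [powerCoeff_smul, hz, smul_sum]⟩

end PowerCoeff

section WordDegree

variable {σ ι : Type*} [Fintype ι]

noncomputable def wordDegree (α : ι → σ) : σ →₀ ℕ :=
  ∑ i, Finsupp.single (α i) 1

theorem wordDegree_apply [DecidableEq σ] (α : ι → σ) (j : σ) :
    wordDegree α j = #{i | α i = j} := by
  simp [wordDegree, Finsupp.finsetSum_apply, Finsupp.single_apply, sum_boole]

theorem prod_X_eq_monomial_wordDegree {K : Type*} [CommSemiring K] (α : ι → σ) :
    ∏ i, (MvPolynomial.X (α i) : MvPolynomial σ K) = MvPolynomial.monomial (wordDegree α) 1 :=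
  (MvPolynomial.monomial_sum_one _ _).symm

variable {K : Type*} [Field K] [Infinite K] [DecidableEq ι] [Fintype σ] [DecidableEq σ]

theorem sum_filter_wordDegree_eq_zero {c : (ι → σ) → K}
    (hc : ∀ a : σ → K, ∑ α, c α * powerCoeff a α = 0) (m : σ →₀ ℕ) :
    ∑ α with wordDegree α = m, c α = 0 := by
  set q : MvPolynomial σ K := ∑ α, MvPolynomial.C (c α) * ∏ i, MvPolynomial.X (α i)
  have hq : q = 0 := MvPolynomial.funext fun a => by simpa [q, powerCoeff] using hc a
  have := congrArg (MvPolynomial.coeff m) hq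
  simpa [q, MvPolynomial.coeff_sum, prod_X_eq_monomial_wordDegree, MvPolynomial.coeff_monomial,
    sum_filter, eq_comm] using this

theorem mem_span_powerCoeff {P : (ι → σ) → K}
    (hP : ∀ α β, wordDegree α = wordDegree β → P α = P β) :
    P ∈ Submodule.span K (Set.range powerCoeff) := by
  by_contra hPspan
  obtain ⟨f, hfP, hf⟩ := Submodule.exists_dual_map_eq_bot_of_notMem hPspan inferInstance
  set c : (ι → σ) → K := fun α => f fun β => if α = β then 1 else 0
  have hfc : ∀ v, f v = ∑ α, v α * c α := fun v => by
    simp [c, f.pi_apply_eq_sum_univ v]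
  have hc : ∀ a : σ → K, ∑ α, c α * powerCoeff a α = 0 := fun a => by
    simpa [hfc, mul_comm] using
      (Submodule.eq_bot_iff _).1 hf _ (Submodule.mem_map_of_mem (Submodule.subset_span ⟨a, rfl⟩))
  refine hfP ?_
  calc f P = ∑ α, P α * c α := hfc P
    _ = ∑ m ∈ univ.image wordDegree, 0 := (sum_image' _ fun α _ => ?_).symm
    _ = 0 := sum_const_zero
  rw [sum_congr rfl fun β hβ => congrArg (· * c β) (hP β α (mem_filter.1 hβ).2), ← mul_sum,
    sum_filter_wordDegree_eq_zero hc, mul_zero]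

end WordDegree

theorem stmt5_general (g d : ℕ) (hd : 1 ≤ d)
    (P : (Fin d → Fin g) → ℂ)
    (hcompat : ∀ α α' : Fin d → Fin g,
      (∀ j : Fin g, wordCount α j = wordCount α' j) → P α = P α') :
    ∃ (t : ℕ) (_ : 1 ≤ t) (A : Fin t → Fin g → ℂ),
      (∑ α : Fin d → Fin g, P α • ncWord α)
        = ∑ s : Fin t, (∑ j : Fin g, A s j • FreeAlgebra.ι ℂ j) ^ d := by
  have hP : P ∈ Submodule.span ℂ (Set.range powerCoeff) :=
    mem_span_powerCoeff fun α β h => hcompat α β fun j => by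
      simpa [wordCount, wordDegree_apply] using DFunLike.congr_fun h j
  have : Nonempty (Fin d) := ⟨⟨0, hd⟩⟩
  obtain ⟨t, ht, A, rfl⟩ := exists_eq_sum_powerCoeff_of_mem_span hP
  refine ⟨t, ht, A, ?_⟩
  simp only [sum_smul_pow_eq_sum_smul_prod_ofFn, Finset.sum_apply, sum_smul]
  exact sum_comm

theorem stmt5 (g d : ℕ) (hg : 1 ≤ g) (hd : 1 ≤ d)
    (P : (Fin d → Fin g) → ℂ)
    (hcompat : ∀ α α' : Fin d → Fin g,
      (∀ j : Fin g, wordCount α j = wordCount α' j) → P α = P α') :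
    ∃ (t : ℕ) (_ : 1 ≤ t) (A : Fin t → Fin g → ℂ),
      (∑ α : Fin d → Fin g, P α • ncWord α)
        = ∑ s : Fin t, (∑ j : Fin g, A s j • FreeAlgebra.ι ℂ j) ^ d :=
  stmt5_general g d hd P hcompat
end

section
/- Let δ₂ divide δ₁ and let n be divisible by δ₁. If a coefficient function P : (Fin n → Fin g) → ℂ satisfies the δ₂-compatibility condition (P(α) = P(α̃) whenever α ∼_{δ₂} α̃), then P satisfies the δ₁-compatibility condition (P(α) = P(α̃) whenever α ∼_{δ₁} α̃). -/
/-- The `δ`-block decomposition of a word `w : Fin n → Fin g`, assuming `δ ∣ n`: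
the `k`-th block is the length-`δ` subword starting at position `k * δ`. -/
def blocks {g : ℕ} (n δ : ℕ) (h : δ ∣ n) (w : Fin n → Fin g) :
    Fin (n / δ) → (Fin δ → Fin g) := fun k i =>
  w ⟨k.1 * δ + i.1, by
    have h1 : i.1 < δ := i.isLt
    have h2 : k.1 + 1 ≤ n / δ := k.isLt
    have h3 : (k.1 + 1) * δ ≤ (n / δ) * δ := Nat.mul_le_mul_right δ h2
    have h4 : (n / δ) * δ = n := Nat.div_mul_cancel h
    nlinarith⟩

/-!
Index the `r`-th `δ₂`-block inside the `a`-th `δ₁`-block by `(a, r)`. A permutation `π` of the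
`δ₁`-blocks of a word then moves its `δ₂`-blocks by `(a, r) ↦ (π a, r)`, so `δ₁`-equivalent words
are `δ₂`-equivalent and a `δ₂`-compatible `P` is `δ₁`-compatible.
-/

def blockIndexEquiv {n δ₁ δ₂ : ℕ} (hdvd : δ₂ ∣ δ₁) (hn : δ₁ ∣ n) :
    Fin (n / δ₁) × Fin (δ₁ / δ₂) ≃ Fin (n / δ₂) :=
  finProdFinEquiv.trans (finCongr (Nat.div_mul_div hn hdvd))

theorem blocks_blockIndexEquiv {g n δ₁ δ₂ : ℕ} (hdvd : δ₂ ∣ δ₁) (hn : δ₁ ∣ n)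
    (w : Fin n → Fin g) (a : Fin (n / δ₁)) (r : Fin (δ₁ / δ₂)) :
    blocks n δ₂ (hdvd.trans hn) w (blockIndexEquiv hdvd hn (a, r)) =
      blocks δ₁ δ₂ hdvd (blocks n δ₁ hn w a) r := by
  funext i
  simp only [blocks, blockIndexEquiv, Equiv.trans_apply, finProdFinEquiv_apply_val, finCongr_apply,
    Fin.val_cast]
  congr 2
  linear_combination (a : ℕ) * Nat.div_mul_cancel hdvd

theorem blocks_eq_comp_of_blocks_eq_comp {g n δ₁ δ₂ : ℕ} (hdvd : δ₂ ∣ δ₁) (hn : δ₁ ∣ n)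
    {α α' : Fin n → Fin g} {π : Equiv.Perm (Fin (n / δ₁))}
    (hπ : blocks n δ₁ hn α' = blocks n δ₁ hn α ∘ π) :
    blocks n δ₂ (hdvd.trans hn) α' = blocks n δ₂ (hdvd.trans hn) α ∘
      (blockIndexEquiv hdvd hn).permCongr (π.prodCongr (Equiv.refl _)) := by
  funext j
  obtain ⟨⟨a, r⟩, rfl⟩ := (blockIndexEquiv hdvd hn).surjective j
  simp [Equiv.permCongr_apply, blocks_blockIndexEquiv, hπ]

theorem stmt15_general (g n δ₁ δ₂ : ℕ)
    (hdvd : δ₂ ∣ δ₁) (hn : δ₁ ∣ n)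
    (P : (Fin n → Fin g) → ℂ)
    (hP : ∀ α α' : Fin n → Fin g,
      (∃ π : Equiv.Perm (Fin (n / δ₂)),
        blocks n δ₂ (hdvd.trans hn) α' = blocks n δ₂ (hdvd.trans hn) α ∘ π) →
      P α = P α') :
    ∀ α α' : Fin n → Fin g,
      (∃ π : Equiv.Perm (Fin (n / δ₁)),
        blocks n δ₁ hn α' = blocks n δ₁ hn α ∘ π) →
      P α = P α' := by
  rintro α α' ⟨π, hπ⟩
  exact hP α α' ⟨_, blocks_eq_comp_of_blocks_eq_comp hdvd hn hπ⟩

theorem stmt15 (g n δ₁ δ₂ : ℕ) (hg : 1 ≤ g) (hδ₁ : 1 ≤ δ₁) (hδ₂ : 1 ≤ δ₂)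
    (hdvd : δ₂ ∣ δ₁) (hn : δ₁ ∣ n)
    (P : (Fin n → Fin g) → ℂ)
    (hP : ∀ α α' : Fin n → Fin g,
      (∃ π : Equiv.Perm (Fin (n / δ₂)),
        blocks n δ₂ (hdvd.trans hn) α' = blocks n δ₂ (hdvd.trans hn) α ∘ π) →
      P α = P α') :
    ∀ α α' : Fin n → Fin g,
      (∃ π : Equiv.Perm (Fin (n / δ₁)),
        blocks n δ₁ hn α' = blocks n δ₁ hn α ∘ π) →
      P α = P α' :=
  stmt15_general g n δ₁ δ₂ hdvd hn P hP
end

section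
/- Let p = x₀⁴ + x₀x₁x₁x₀ + x₁x₀x₀x₁ + x₁⁴ in the free algebra FreeAlgebra ℂ (Fin 2). Then: (a) p satisfies the 2-compatibility condition; (b) the commutative collapse of p equals (X₀² + X₁²)² in MvPolynomial (Fin 2) ℂ (so the collapse has a one-term, hence two-term, (2,2)-Waring decomposition); but (c) there do not exist homogeneous degree-2 noncommutative polynomials H₁, H₂ ∈ FreeAlgebra ℂ (Fin 2) (i.e. of the form ∑_{β : Fin 2 → Fin 2} A(β) • x_{β(0)} x_{β(1)}) with p = H₁² + H₂². -/
open scoped BigOperators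

/-- The generators of the free algebra on two letters. -/
noncomputable def x (j : Fin 2) : FreeAlgebra ℂ (Fin 2) := FreeAlgebra.ι ℂ j

/-- The polynomial `p = x₀⁴ + x₀x₁x₁x₀ + x₁x₀x₀x₁ + x₁⁴`. -/
noncomputable def pEx : FreeAlgebra ℂ (Fin 2) :=
  x 0 * x 0 * x 0 * x 0 + x 0 * x 1 * x 1 * x 0 + x 1 * x 0 * x 0 * x 1 + x 1 * x 1 * x 1 * x 1

/-!
The coefficient of `x_β x_γ` (`β, γ` words of length two) in `p = ∑_{i,j} x_i x_j x_j x_i` is `1`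
if `γ` is the reversal of `β` and `0` otherwise: the coefficient matrix of `p` is the permutation
matrix of word reversal. Since reversal is an involution this matrix is symmetric, which is the
compatibility (a); (b) is a ring identity. For (c), the coefficient matrix of `H_A² + H_B²` is
the Gram matrix `C Cᵀ` of the `4 × 2` matrix `C = [A | B]`, so it has rank at most `2`, whereas a
permutation matrix of size `4` has rank `4`. Coefficients can be compared because the words of
length four form part of a basis of the free algebra.
-/

open Function Matrix

theorem Fintype.sum_fin_two_arrow {α M : Type*} [Fintype α] [AddCommMonoid M]
    (f : (Fin 2 → α) → M) : ∑ β, f β = ∑ a, ∑ b, f ![a, b] := by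
  rw [← (finTwoArrowEquiv α).symm.sum_comp, Fintype.sum_prod_type]
  rfl

theorem Matrix.rank_permMatrix {n R : Type*} [Fintype n] [DecidableEq n] [CommSemiring R]
    [StrongRankCondition R] (σ : Equiv.Perm n) : (σ.permMatrix R).rank = Fintype.card n :=
  -- `permMatrixHom σ⁻¹` is `σ⁻¹⁻¹.permMatrix R`, which unfolds to `σ.permMatrix R`
  rank_of_isUnit _ ((Group.isUnit σ⁻¹).map (permMatrixHom (n := n) (R := R)))

theorem Matrix.rank_mul_transpose_le {m R : Type*} [Fintype m] [CommSemiring R]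
    [StrongRankCondition R] {r : ℕ} (C : Matrix m (Fin r) R) : (C * Cᵀ).rank ≤ r :=
  (C.rank_mul_le_left _).trans (C.rank_le_card_width.trans_eq (Fintype.card_fin r))

namespace FreeAlgebra

variable (R : Type*) {X : Type*} [CommSemiring R]

noncomputable def quadMonomial (β : Fin 2 → X) : FreeAlgebra R X := ι R (β 0) * ι R (β 1)

noncomputable def quarticMonomial (μ : Fin 2 → Fin 2 → X) : FreeAlgebra R X :=
  ι R (μ 0 0) * ι R (μ 0 1) * ι R (μ 1 0) * ι R (μ 1 1)

theorem quadMonomial_mul_quadMonomial (β γ : Fin 2 → X) :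
    quadMonomial R β * quadMonomial R γ = quarticMonomial R ![β, γ] := by
  simp [quadMonomial, quarticMonomial, mul_assoc]

theorem quarticWord_injective :
    Injective fun μ : Fin 2 → Fin 2 → X =>
      FreeMonoid.of (μ 0 0) * FreeMonoid.of (μ 0 1) * FreeMonoid.of (μ 1 0) * FreeMonoid.of (μ 1 1) := by
  intro μ ν h
  have h := congrArg FreeMonoid.toList h
  simp only [FreeMonoid.toList_mul, FreeMonoid.toList_of, List.cons_append, List.nil_append,
    List.cons.injEq, and_true] at h
  obtain ⟨h00, h01, h10, h11⟩ := h
  funext i j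
  fin_cases i <;> fin_cases j <;> assumption

theorem linearIndependent_quarticMonomial :
    LinearIndependent R (quarticMonomial R : (Fin 2 → Fin 2 → X) → FreeAlgebra R X) := by
  convert (basisFreeMonoid R X).linearIndependent.comp _ quarticWord_injective using 1
  funext μ
  simp [quarticMonomial, basisFreeMonoid, equivMonoidAlgebraFreeMonoid]

theorem sum_quadMonomial_mul_sum_quadMonomial [Fintype X] (A B : (Fin 2 → X) → R) :
    (∑ β, A β • quadMonomial R β) * (∑ γ, B γ • quadMonomial R γ) =
      ∑ μ, (A (μ 0) * B (μ 1)) • quarticMonomial R μ := by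
  simp only [Finset.sum_mul_sum, smul_mul_smul_comm, quadMonomial_mul_quadMonomial,
    Fintype.sum_fin_two_arrow (fun μ => (A (μ 0) * B (μ 1)) • quarticMonomial R μ)]
  rfl

end FreeAlgebra

open FreeAlgebra

theorem Fin.involutive_comp_rev {α : Type*} {n : ℕ} : Involutive fun β : Fin n → α => β ∘ Fin.rev :=
  fun β => by ext i; simp

def Fin.revWord (α : Type*) (n : ℕ) : Equiv.Perm (Fin n → α) :=
  Involutive.toPerm _ Fin.involutive_comp_rev

@[simp] theorem Fin.revWord_apply {α : Type*} {n : ℕ} (β : Fin n → α) (i : Fin n) :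
    Fin.revWord α n β i = β i.rev := rfl

theorem Fin.permMatrix_revWord_apply_comm {α R : Type*} [DecidableEq α] [Zero R] [One R] {n : ℕ}
    (β γ : Fin n → α) : (Fin.revWord α n).permMatrix R β γ = (Fin.revWord α n).permMatrix R γ β := by
  rw [← transpose_apply ((Fin.revWord α n).permMatrix R), transpose_permMatrix, Equiv.Perm.inv_def,
    Fin.revWord, Involutive.toPerm_symm]

theorem pEx_eq_sum :
    pEx = ∑ μ, (Fin.revWord (Fin 2) 2).permMatrix ℂ (μ 0) (μ 1) • quarticMonomial ℂ μ := by
  simp only [pEx, x, Fin.isValue, PEquiv.toMatrix_apply, Equiv.toPEquiv_apply, Option.mem_def,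
    Option.some.injEq, quarticMonomial, ite_smul, one_smul, zero_smul, Fintype.sum_fin_two_arrow,
    cons_val_zero, cons_val_one, cons_val_fin_one, cons_val', Finset.sum_ite_eq, Finset.mem_univ,
    ↓reduceIte, Fin.revWord_apply, Fin.rev_zero, Fin.reduceLast, Fin.reduceRev, Fin.sum_univ_two]
  abel

theorem eq_permMatrix_of_pEx_eq_sum {P : (Fin 2 → Fin 2 → Fin 2) → ℂ}
    (hP : pEx = ∑ μ, P μ • quarticMonomial ℂ μ) (μ : Fin 2 → Fin 2 → Fin 2) :
    P μ = (Fin.revWord (Fin 2) 2).permMatrix ℂ (μ 0) (μ 1) :=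
  Fintype.linearIndependent_iffₛ.1 (linearIndependent_quarticMonomial ℂ) _ _
    (hP.symm.trans pEx_eq_sum) μ

theorem pEx_compatible (P : (Fin 2 → Fin 2 → Fin 2) → ℂ)
    (hP : pEx = ∑ μ, P μ • quarticMonomial ℂ μ) (μ : Fin 2 → Fin 2 → Fin 2)
    (π : Equiv.Perm (Fin 2)) : P (μ ∘ π) = P μ := by
  have hπ : π = 1 ∨ π = Equiv.swap 0 1 := by revert π; decide
  rcases hπ with rfl | rfl
  · rfl
  · rw [eq_permMatrix_of_pEx_eq_sum hP, eq_permMatrix_of_pEx_eq_sum hP]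
    exact Fin.permMatrix_revWord_apply_comm _ _

theorem gram_eq_permMatrix_of_pEx_eq_sq_add_sq (A B : (Fin 2 → Fin 2) → ℂ)
    (h : pEx = (∑ β, A β • quadMonomial ℂ β) ^ 2 + (∑ β, B β • quadMonomial ℂ β) ^ 2) :
    of (fun β => ![A β, B β]) * (of fun β => ![A β, B β])ᵀ = (Fin.revWord (Fin 2) 2).permMatrix ℂ := by
  have hsum : pEx = ∑ μ, (A (μ 0) * A (μ 1) + B (μ 0) * B (μ 1)) • quarticMonomial ℂ μ := by
    simp only [h, sq, sum_quadMonomial_mul_sum_quadMonomial, add_smul, Finset.sum_add_distrib]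
  ext β γ
  simpa [mul_apply, Fin.sum_univ_two] using eq_permMatrix_of_pEx_eq_sum hsum ![β, γ]

theorem pEx_ne_sq_add_sq (A B : (Fin 2 → Fin 2) → ℂ) :
    pEx ≠ (∑ β, A β • quadMonomial ℂ β) ^ 2 + (∑ β, B β • quadMonomial ℂ β) ^ 2 := by
  intro h
  have hrank := rank_mul_transpose_le (of fun β => ![A β, B β])
  rw [gram_eq_permMatrix_of_pEx_eq_sq_add_sq A B h, rank_permMatrix] at hrank
  simp at hrank

theorem stmt16 :
    -- (a) p satisfies the 2-compatibility condition
    (∀ P : (Fin 2 → (Fin 2 → Fin 2)) → ℂ,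
      pEx = (∑ μ : Fin 2 → (Fin 2 → Fin 2),
          P μ • (x (μ 0 0) * x (μ 0 1) * x (μ 1 0) * x (μ 1 1))) →
      ∀ (μ : Fin 2 → (Fin 2 → Fin 2)) (π : Equiv.Perm (Fin 2)), P (μ ∘ π) = P μ)
    ∧
    -- (b) the commutative collapse of p equals (X₀² + X₁²)²
    ((MvPolynomial.X 0 * MvPolynomial.X 0 * MvPolynomial.X 0 * MvPolynomial.X 0
        + MvPolynomial.X 0 * MvPolynomial.X 1 * MvPolynomial.X 1 * MvPolynomial.X 0
        + MvPolynomial.X 1 * MvPolynomial.X 0 * MvPolynomial.X 0 * MvPolynomial.X 1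
        + MvPolynomial.X 1 * MvPolynomial.X 1 * MvPolynomial.X 1 * MvPolynomial.X 1
        : MvPolynomial (Fin 2) ℂ)
      = (MvPolynomial.X 0 ^ 2 + MvPolynomial.X 1 ^ 2) ^ 2)
    ∧
    -- (c) p is not a sum of two squares of homogeneous degree-2 NC polynomials
    ¬ ∃ A B : (Fin 2 → Fin 2) → ℂ,
        pEx = (∑ β : Fin 2 → Fin 2, A β • (x (β 0) * x (β 1))) ^ 2
            + (∑ β : Fin 2 → Fin 2, B β • (x (β 0) * x (β 1))) ^ 2 :=
  ⟨pEx_compatible, by ring, fun ⟨A, B, h⟩ => pEx_ne_sq_add_sq A B h⟩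
end
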